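/- arXiv:0904.3426 — 2 statements merged into one kernel-verified Lean document; each statement's English description precedes it below -/
import Mathlib

section
/- Appendix angular error bound: let (x, y) be a point on the unit circle and (x₀, y₀) a point with |x − x₀| ≤ α and |y − y₀| ≤ α, where 0 ≤ α ≤ 1/√2 and (x₀, y₀) ≠ (0,0). Then the angle Δφ between the vectors (x, y) and (x₀, y₀) satisfies Δφ ≤ arcsin(√2·α). -/
/-- The angle between two nonzero vectors in ℝ². -/
noncomputable def angle2 (x y x₀ y₀ : ℝ) : ℝ :=
  Real.arccos ((x * x₀ + y * y₀) /
    (Real.sqrt (x ^ 2 + y ^ 2) * Real.sqrt (x₀ ^ 2 + y₀ ^ 2)))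

theorem angular_error_bound (x y x₀ y₀ α : ℝ)
    (hcirc : x ^ 2 + y ^ 2 = 1)
    (hα0 : 0 ≤ α) (hα1 : α ≤ 1 / Real.sqrt 2)
    (hx : |x - x₀| ≤ α) (hy : |y - y₀| ≤ α)
    (hne : ¬(x₀ = 0 ∧ y₀ = 0)) :
    angle2 x y x₀ y₀ ≤ Real.arcsin (Real.sqrt 2 * α) := by
  have hsqrt2 : (0:ℝ) < Real.sqrt 2 := by positivity
  set r : ℝ := Real.sqrt 2 * α with hrdef
  have hr0 : 0 ≤ r := by positivity
  have hr2 : r ^ 2 = 2 * α ^ 2 := by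
    rw [hrdef, mul_pow, Real.sq_sqrt (by norm_num : (2:ℝ) ≥ 0)]
  have hr1 : r ≤ 1 := by
    have : Real.sqrt 2 * α ≤ Real.sqrt 2 * (1 / Real.sqrt 2) :=
      mul_le_mul_of_nonneg_left hα1 (le_of_lt hsqrt2)
    rw [hrdef]
    calc Real.sqrt 2 * α ≤ Real.sqrt 2 * (1 / Real.sqrt 2) := this
      _ = 1 := by field_simp
  -- positivity of the norm of (x₀, y₀)
  have hs2 : 0 < x₀ ^ 2 + y₀ ^ 2 := by
    rcases not_and_or.mp hne with h | h
    · nlinarith [sq_nonneg y₀, mul_self_pos.mpr h]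
    · nlinarith [sq_nonneg x₀, mul_self_pos.mpr h]
  set s : ℝ := Real.sqrt (x₀ ^ 2 + y₀ ^ 2) with hsdef
  have hs : 0 < s := Real.sqrt_pos.mpr hs2
  have hss : s ^ 2 = x₀ ^ 2 + y₀ ^ 2 := Real.sq_sqrt (le_of_lt hs2)
  set t : ℝ := x * x₀ + y * y₀ with htdef
  -- distance bound
  have hxx := abs_le.mp hx
  have hyy := abs_le.mp hy
  have hd : (x - x₀) ^ 2 + (y - y₀) ^ 2 ≤ r ^ 2 := by nlinarith
  -- key inequality
  have hc0 : 0 ≤ 1 - r ^ 2 := by nlinarith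
  set c : ℝ := Real.sqrt (1 - r ^ 2) with hcdef
  have hcc : c ^ 2 = 1 - r ^ 2 := Real.sq_sqrt hc0
  have hcnn : 0 ≤ c := Real.sqrt_nonneg _
  have hkey : c * s ≤ t := by nlinarith [sq_nonneg (s - c)]
  have hdiv : c ≤ t / s := (le_div_iff₀ hs).mpr (by linarith [mul_comm c s])
  -- rewrite angle2
  have hang : angle2 x y x₀ y₀ = Real.arccos (t / s) := by
    rw [angle2, hcirc, Real.sqrt_one, one_mul]
  rw [hang]
  have h1 : Real.arccos (t / s) ≤ Real.arccos c := by
    rw [Real.arccos_eq_pi_div_two_sub_arcsin, Real.arccos_eq_pi_div_two_sub_arcsin]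
    linarith [Real.monotone_arcsin hdiv]
  have h2 : Real.arccos c = Real.arcsin r := by
    have : c = Real.cos (Real.arcsin r) := (Real.cos_arcsin r).symm
    rw [this, Real.arccos_cos (Real.arcsin_nonneg.mpr hr0)
      (by linarith [Real.arcsin_le_pi_div_two r, Real.pi_pos])]
  linarith [h1, h2.le]
end

section
/- With α = 0.306·2 = 0.612 in the angular error bound, the angular error is at most π/3: if x² + y² = 1, |x − x₀| ≤ 0.612, |y − y₀| ≤ 0.612 and (x₀,y₀) ≠ (0,0), then the angle between (x,y) and (x₀,y₀) is at most π/3. -/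
theorem angular_error_le_pi_div_three (x y x₀ y₀ : ℝ)
    (hcirc : x ^ 2 + y ^ 2 = 1)
    (hx : |x - x₀| ≤ 0.612) (hy : |y - y₀| ≤ 0.612)
    (hne : ¬(x₀ = 0 ∧ y₀ = 0)) :
    angle2 x y x₀ y₀ ≤ Real.pi / 3 := by
  have ha := abs_le.mp hx
  have hb := abs_le.mp hy
  obtain ⟨s, hs_def⟩ : ∃ s : ℝ, s = x * (x - x₀) + y * (y - y₀) := ⟨_, rfl⟩
  obtain ⟨d, hd_def⟩ : ∃ d : ℝ, d = (x - x₀) ^ 2 + (y - y₀) ^ 2 := ⟨_, rfl⟩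
  have hd : d ≤ 0.749088 := by rw [hd_def]; nlinarith [ha.1, ha.2, hb.1, hb.2]
  have hs2 : s ^ 2 ≤ d := by
    rw [hs_def, hd_def]
    nlinarith [sq_nonneg (x * (y - y₀) - y * (x - x₀)), hcirc]
  have hs1 : s ≤ 1 := by nlinarith
  have hr0 : (0:ℝ) < x₀ ^ 2 + y₀ ^ 2 := by
    rcases eq_or_ne x₀ 0 with h1 | h1
    · rcases eq_or_ne y₀ 0 with h2 | h2
      · exact absurd ⟨h1, h2⟩ hne
      · positivity
    · positivity
  have hrpos : 0 < Real.sqrt (x₀ ^ 2 + y₀ ^ 2) := Real.sqrt_pos.mpr hr0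
  obtain ⟨r, hr_def⟩ : ∃ r : ℝ, r = Real.sqrt (x₀ ^ 2 + y₀ ^ 2) := ⟨_, rfl⟩
  rw [← hr_def] at hrpos
  have hr2 : r ^ 2 = x₀ ^ 2 + y₀ ^ 2 := by rw [hr_def]; exact Real.sq_sqrt hr0.le
  have hrel : r ^ 2 = 1 - 2 * s + d := by
    rw [hr2, hs_def, hd_def]; nlinarith [hcirc]
  have hinner : x * x₀ + y * y₀ = 1 - s := by rw [hs_def]; linarith [hcirc]
  have h1s : 0 < 1 - s := by nlinarith
  have hkey : r ≤ 2 * (1 - s) := by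
    by_contra hcon
    push_neg at hcon
    have hsq : (2 * (1 - s)) ^ 2 < r ^ 2 := by
      apply pow_lt_pow_left₀ hcon (by linarith) (by norm_num)
    nlinarith [sq_nonneg (s - 3/4)]
  have h1 : Real.sqrt (x ^ 2 + y ^ 2) = 1 := by rw [hcirc]; exact Real.sqrt_one
  have hq : (1/2 : ℝ) ≤ (x * x₀ + y * y₀) /
      (Real.sqrt (x ^ 2 + y ^ 2) * Real.sqrt (x₀ ^ 2 + y₀ ^ 2)) := by
    rw [h1, one_mul, ← hr_def, hinner, le_div_iff₀ hrpos]
    linarith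
  have h6 : Real.arcsin (1/2) = Real.pi / 6 := by
    rw [← Real.sin_pi_div_six]
    exact Real.arcsin_sin (by linarith [Real.pi_pos]) (by linarith [Real.pi_pos])
  have hmono := Real.monotone_arcsin hq
  unfold angle2
  rw [Real.arccos]
  linarith
end
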